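/- arXiv:1103.0138 — 2 statements merged into one kernel-verified Lean document; each statement's English description precedes it below -/
import Mathlib

section
/- Let a : ℝⁿ → ℂ be a smooth function such that for every multi-index α there is a constant C_α with |∂_ξ^α a(ξ)| ≤ C_α (1+|ξ|)^{-n-1-|α|}. Then the inverse Fourier transform K(x) = (2π)^{-n} ∫_{ℝⁿ} e^{i x·ξ} a(ξ) dξ satisfies |K(x)| ≤ C (1+|x|)^{-n-1} for some constant C depending only on n and finitely many of the C_α; in particular K ∈ L¹(ℝⁿ). -/
open MeasureTheory

set_option maxHeartbeats 1000000
theorem stmt_1 (n : ℕ) (a : (Fin n → ℝ) → ℂ) (ha : ContDiff ℝ (⊤ : ℕ∞) a)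
    (hbound : ∀ k : ℕ, ∃ C : ℝ, ∀ ξ : Fin n → ℝ,
      ‖iteratedFDeriv ℝ k a ξ‖ ≤ C * (1 + ‖ξ‖) ^ (-(n : ℝ) - 1 - k)) :
    ∃ C : ℝ,
      (∀ x : Fin n → ℝ,
        ‖((2 * Real.pi) ^ n : ℝ)⁻¹ •
            ∫ ξ : Fin n → ℝ,
              Complex.exp (Complex.I * ((∑ i, x i * ξ i : ℝ) : ℂ)) * a ξ‖ ≤
          C * (1 + ‖x‖) ^ (-(n : ℝ) - 1)) ∧
      Integrable (fun x : Fin n → ℝ =>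
        ((2 * Real.pi) ^ n : ℝ)⁻¹ •
          ∫ ξ : Fin n → ℝ,
            Complex.exp (Complex.I * ((∑ i, x i * ξ i : ℝ) : ℂ)) * a ξ) := by
  classical
  have pi_pos := Real.pi_pos
  -- the dot-product bilinear form on `Fin n → ℝ`
  set L : (Fin n → ℝ) →L[ℝ] (Fin n → ℝ) →L[ℝ] ℝ :=
    ∑ i : Fin n, (ContinuousLinearMap.proj (R := ℝ) (φ := fun _ : Fin n => ℝ) i).smulRight
      (ContinuousLinearMap.proj (R := ℝ) (φ := fun _ : Fin n => ℝ) i) with hLdef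
  have hL : ∀ v w : Fin n → ℝ, L v w = ∑ i, v i * w i := by
    intro v w
    simp [hLdef, ContinuousLinearMap.sum_apply, smul_eq_mul]
  -- integrability of `(1+‖ξ‖)^{-(n+1)}`
  have hdecay : Integrable (fun ξ : Fin n → ℝ => (1 + ‖ξ‖) ^ (-((n : ℝ) + 1))) := by
    apply integrable_one_add_norm
    simp
  have hrpow_eq : ∀ t : ℝ, (1 + t) ^ (-(n : ℝ) - 1) = (1 + t) ^ (-((n : ℝ) + 1)) := by
    intro t
    congr 1
    ring
  -- integrability of all iterated derivatives
  have hInt : ∀ m : ℕ, Integrable (fun ξ : Fin n → ℝ => ‖iteratedFDeriv ℝ m a ξ‖) := by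
    intro m
    obtain ⟨C, hC⟩ := hbound m
    refine ((hdecay.const_mul C).mono'
      ((ha.continuous_iteratedFDeriv (by exact_mod_cast le_top)).norm.aestronglyMeasurable) ?_)
    filter_upwards with ξ
    rw [norm_norm]
    calc ‖iteratedFDeriv ℝ m a ξ‖ ≤ C * (1 + ‖ξ‖) ^ (-(n : ℝ) - 1 - m) := hC ξ
      _ ≤ C * (1 + ‖ξ‖) ^ (-((n : ℝ) + 1)) := by
          have hC0 : 0 ≤ C := by
            have h0 := hC 0
            simpa [Real.one_rpow] using (norm_nonneg (iteratedFDeriv ℝ m a 0)).trans h0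
          apply mul_le_mul_of_nonneg_left _ hC0
          apply Real.rpow_le_rpow_of_exponent_le (by linarith [norm_nonneg ξ])
          have : (0 : ℝ) ≤ m := Nat.cast_nonneg m
          linarith
  have hIa : Integrable a := by
    refine (hInt 0).mono' ha.continuous.aestronglyMeasurable ?_
    filter_upwards with ξ
    simp [norm_iteratedFDeriv_zero]
  -- the Fourier integral of `a`
  set F : (Fin n → ℝ) → ℂ :=
    VectorFourier.fourierIntegral Real.fourierChar volume L.toLinearMap₁₂ a with hF
  -- trivial bound
  set M : ℝ := ∫ ξ : Fin n → ℝ, ‖a ξ‖ with hM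
  have hA : ∀ w, ‖F w‖ ≤ M :=
    fun w => VectorFourier.norm_fourierIntegral_le_integral_norm _ _ _ _ _
  have hM0 : 0 ≤ M := integral_nonneg fun ξ => norm_nonneg _
  -- key bound, from integration by parts (done in mathlib)
  have h'f : ∀ (k m : ℕ), (k : ℕ∞) ≤ (0 : ℕ∞) → (m : ℕ∞) ≤ ((n + 1 : ℕ) : ℕ∞) →
      Integrable (fun v : Fin n → ℝ => ‖v‖ ^ k * ‖iteratedFDeriv ℝ m a v‖) := by
    intro k m hk _
    have hk0 : k = 0 := by exact_mod_cast le_antisymm hk zero_le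
    subst hk0
    simpa using hInt m
  have key : ∀ w : Fin n → ℝ,
      |L w w| ^ (n + 1) * ‖F w‖ ≤ ‖w‖ ^ (n + 1) * (2 * (0:ℕ) + 2) ^ (n + 1) *
        ∑ p ∈ Finset.range (0 + 1) ×ˢ Finset.range ((n + 1) + 1),
          ∫ v : Fin n → ℝ, ‖v‖ ^ p.1 * ‖iteratedFDeriv ℝ p.2 a v‖ := by
    intro w
    have h := VectorFourier.pow_mul_norm_iteratedFDeriv_fourierIntegral_le (E := ℂ)
      L (μ := volume) (K := (0 : ℕ∞)) (N := ((n + 1 : ℕ) : ℕ∞))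
      (ha.of_le (by exact_mod_cast le_top)) h'f (k := 0) (n := n + 1) le_rfl le_rfl w w
    rw [norm_iteratedFDeriv_zero] at h
    rw [pow_zero, mul_one] at h
    exact h
  set S : ℝ := ∑ p ∈ Finset.range (0 + 1) ×ˢ Finset.range ((n + 1) + 1),
      ∫ v : Fin n → ℝ, ‖v‖ ^ p.1 * ‖iteratedFDeriv ℝ p.2 a v‖ with hS
  have hS0 : 0 ≤ S := by
    apply Finset.sum_nonneg
    intro p _
    apply integral_nonneg
    intro v
    positivity
  set B : ℝ := (2 * (0:ℕ) + 2) ^ (n + 1) * S with hBdef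
  have hB0 : 0 ≤ B := by
    apply mul_nonneg _ hS0
    positivity
  have hB : ∀ w : Fin n → ℝ, ‖w‖ ^ (n + 1) * ‖F w‖ ≤ B := by
    intro w
    rcases eq_or_ne w 0 with rfl | hw
    · have h0 : ‖(0 : Fin n → ℝ)‖ ^ (n + 1) * ‖F 0‖ = 0 := by simp
      rw [h0]; exact hB0
    · have hwpos : 0 < ‖w‖ := norm_pos_iff.2 hw
      have hsq : ‖w‖ ^ 2 ≤ L w w := by
        have hsum0 : (0:ℝ) ≤ ∑ j, w j * w j := by
          apply Finset.sum_nonneg; intro j _; exact mul_self_nonneg _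
        have hle : ‖w‖ ≤ Real.sqrt (∑ j, w j * w j) := by
          apply (pi_norm_le_iff_of_nonneg (Real.sqrt_nonneg _)).2
          intro i
          rw [Real.norm_eq_abs, ← Real.sqrt_mul_self_eq_abs]
          apply Real.sqrt_le_sqrt
          exact Finset.single_le_sum (f := fun j => w j * w j)
            (fun j _ => mul_self_nonneg _) (Finset.mem_univ i)
        calc ‖w‖ ^ 2 ≤ Real.sqrt (∑ j, w j * w j) ^ 2 :=
              pow_le_pow_left₀ (norm_nonneg _) hle 2
          _ = ∑ j, w j * w j := Real.sq_sqrt hsum0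
          _ = L w w := (hL w w).symm
      have h1 : ‖w‖ ^ (n + 1) * (‖w‖ ^ (n + 1) * ‖F w‖) ≤ ‖w‖ ^ (n + 1) * B := by
        calc ‖w‖ ^ (n + 1) * (‖w‖ ^ (n + 1) * ‖F w‖)
            = (‖w‖ ^ 2) ^ (n + 1) * ‖F w‖ := by ring
          _ ≤ |L w w| ^ (n + 1) * ‖F w‖ :=
              mul_le_mul_of_nonneg_right
                (pow_le_pow_left₀ (by positivity) (hsq.trans (le_abs_self _)) _)
                (norm_nonneg _)
          _ ≤ ‖w‖ ^ (n + 1) * (2 * (0:ℕ) + 2) ^ (n + 1) * S := key w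
          _ = ‖w‖ ^ (n + 1) * B := by rw [hBdef]; ring
      exact le_of_mul_le_mul_left h1 (by positivity)
  -- combined bound `‖F w‖ ≤ C₀ (1+‖w‖)^{-(n+1)}`
  set C₀ : ℝ := 2 ^ (n + 1) * (M + B) with hC₀
  have hC₀0 : 0 ≤ C₀ := by
    apply mul_nonneg (by positivity)
    linarith
  have hpow : ∀ t : ℝ, 0 ≤ t → (1 + t) ^ (n + 1) ≤ 2 ^ (n + 1) * (1 + t ^ (n + 1)) := by
    intro t ht
    have h1 : (1 + t) ≤ 2 * max 1 t := by
      have := le_max_left 1 t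
      have := le_max_right 1 t
      linarith
    calc (1 + t) ^ (n + 1) ≤ (2 * max 1 t) ^ (n + 1) :=
          pow_le_pow_left₀ (by linarith) h1 _
      _ = 2 ^ (n + 1) * (max 1 t) ^ (n + 1) := mul_pow _ _ _
      _ ≤ 2 ^ (n + 1) * (1 + t ^ (n + 1)) := by
          gcongr
          rcases max_cases 1 t with ⟨h, _⟩ | ⟨h, _⟩ <;> rw [h]
          · have ht' : 0 ≤ t ^ (n + 1) := by positivity
            rw [one_pow]; linarith
          · linarith
  have hmain : ∀ w : Fin n → ℝ, ‖F w‖ ≤ C₀ * ((1 + ‖w‖) ^ (n + 1))⁻¹ := by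
    intro w
    have hpos : (0:ℝ) < (1 + ‖w‖) ^ (n + 1) := by positivity
    have hkey : (1 + ‖w‖) ^ (n + 1) * ‖F w‖ ≤ C₀ := by
      calc (1 + ‖w‖) ^ (n + 1) * ‖F w‖
          ≤ 2 ^ (n + 1) * (1 + ‖w‖ ^ (n + 1)) * ‖F w‖ :=
            mul_le_mul_of_nonneg_right (hpow _ (norm_nonneg w)) (norm_nonneg _)
        _ = 2 ^ (n + 1) * (‖F w‖ + ‖w‖ ^ (n + 1) * ‖F w‖) := by ring
        _ ≤ 2 ^ (n + 1) * (M + B) := by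
            gcongr
            · exact hA w
            · exact hB w
        _ = C₀ := rfl
    calc ‖F w‖ = ((1 + ‖w‖) ^ (n + 1))⁻¹ * ((1 + ‖w‖) ^ (n + 1) * ‖F w‖) := by
          field_simp
      _ ≤ ((1 + ‖w‖) ^ (n + 1))⁻¹ * C₀ :=
          mul_le_mul_of_nonneg_left hkey (by positivity)
      _ = C₀ * ((1 + ‖w‖) ^ (n + 1))⁻¹ := mul_comm _ _
  -- identification of the integral with the Fourier integral
  have hFx : ∀ x : Fin n → ℝ,
      (∫ ξ : Fin n → ℝ, Complex.exp (Complex.I * ((∑ i, x i * ξ i : ℝ) : ℂ)) * a ξ) =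
        F (-((2 * Real.pi)⁻¹ • x)) := by
    intro x
    rw [hF, VectorFourier.fourierIntegral]
    congr 1
    ext ξ
    rw [Circle.smul_def, Real.fourierChar_apply]
    rw [ContinuousLinearMap.toLinearMap₁₂_apply_apply_apply, hL]
    have hπ : (2 * Real.pi) ≠ 0 := by positivity
    have harg : (2 * Real.pi * -(∑ i, ξ i * (-((2 * Real.pi)⁻¹ • x)) i) : ℝ)
        = ∑ i, x i * ξ i := by
      simp only [Pi.smul_apply, Pi.neg_apply, smul_eq_mul, mul_neg,
        Finset.sum_neg_distrib, neg_neg]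
      rw [Finset.mul_sum]
      apply Finset.sum_congr rfl
      intro i _
      field_simp
    rw [harg]
    rw [mul_comm Complex.I (((∑ i, x i * ξ i : ℝ) : ℂ)), smul_eq_mul]
  -- the decay bound in the required form
  have hx_rpow : ∀ x : Fin n → ℝ,
      (1 + ‖x‖) ^ (-(n : ℝ) - 1) = ((1 + ‖x‖) ^ (n + 1 : ℕ))⁻¹ := by
    intro x
    rw [hrpow_eq, Real.rpow_neg (by linarith [norm_nonneg x])]
    congr 1
    rw [show ((n : ℝ) + 1) = ((n + 1 : ℕ) : ℝ) by push_cast; ring, Real.rpow_natCast]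
  set C : ℝ := ((2 * Real.pi) ^ n)⁻¹ * C₀ * (2 * Real.pi) ^ (n + 1) with hCdef
  have hbound_final : ∀ x : Fin n → ℝ,
      ‖((2 * Real.pi) ^ n : ℝ)⁻¹ •
          ∫ ξ : Fin n → ℝ, Complex.exp (Complex.I * ((∑ i, x i * ξ i : ℝ) : ℂ)) * a ξ‖ ≤
        C * (1 + ‖x‖) ^ (-(n : ℝ) - 1) := by
    intro x
    rw [hFx x, norm_smul, Real.norm_eq_abs, abs_of_nonneg (by positivity), hx_rpow]
    set w : Fin n → ℝ := -((2 * Real.pi)⁻¹ • x) with hw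
    have hwn : ‖w‖ = (2 * Real.pi)⁻¹ * ‖x‖ := by
      rw [hw, norm_neg, norm_smul, Real.norm_eq_abs, abs_of_nonneg (by positivity)]
    have h2π : (1:ℝ) ≤ 2 * Real.pi := by linarith [Real.pi_gt_three]
    have hkey : ((1 + ‖w‖) ^ (n + 1 : ℕ))⁻¹ ≤
        (2 * Real.pi) ^ (n + 1) * ((1 + ‖x‖) ^ (n + 1 : ℕ))⁻¹ := by
      have hstep : (2 * Real.pi)⁻¹ * (1 + ‖x‖) ≤ 1 + ‖w‖ := by
        rw [hwn, mul_add, mul_one]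
        have hle1 : (2 * Real.pi)⁻¹ ≤ 1 := by
          rw [inv_le_one_iff₀]; right; exact h2π
        linarith
      have hpos1 : (0:ℝ) < (2 * Real.pi)⁻¹ * (1 + ‖x‖) := by positivity
      have hmono : ((2 * Real.pi)⁻¹ * (1 + ‖x‖)) ^ (n + 1) ≤ (1 + ‖w‖) ^ (n + 1) :=
        pow_le_pow_left₀ (le_of_lt hpos1) hstep _
      have hinv : ((1 + ‖w‖) ^ (n + 1 : ℕ))⁻¹ ≤
          (((2 * Real.pi)⁻¹ * (1 + ‖x‖)) ^ (n + 1))⁻¹ := by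
        apply inv_anti₀ (by positivity) hmono
      refine hinv.trans (le_of_eq ?_)
      rw [mul_pow, mul_inv, inv_pow, inv_inv]
    calc ((2 * Real.pi) ^ n)⁻¹ * ‖F w‖
        ≤ ((2 * Real.pi) ^ n)⁻¹ * (C₀ * ((1 + ‖w‖) ^ (n + 1 : ℕ))⁻¹) :=
          mul_le_mul_of_nonneg_left (hmain w) (by positivity)
      _ ≤ ((2 * Real.pi) ^ n)⁻¹ *
            (C₀ * ((2 * Real.pi) ^ (n + 1) * ((1 + ‖x‖) ^ (n + 1 : ℕ))⁻¹)) := by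
          apply mul_le_mul_of_nonneg_left _ (by positivity)
          exact mul_le_mul_of_nonneg_left hkey hC₀0
      _ = C * ((1 + ‖x‖) ^ (n + 1 : ℕ))⁻¹ := by rw [hCdef]; ring
  refine ⟨C, hbound_final, ?_⟩
  -- integrability
  have hLcont : Continuous fun p : (Fin n → ℝ) × (Fin n → ℝ) => L.toLinearMap₁₂ p.1 p.2 := by
    have hc : Continuous fun p : (Fin n → ℝ) × (Fin n → ℝ) => L p.1 p.2 :=
      L.continuous₂
    simpa [ContinuousLinearMap.toLinearMap₁₂_apply_apply_apply] using hc
  have hFcont : Continuous F := by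
    rw [hF]
    exact VectorFourier.fourierIntegral_continuous Real.continuous_fourierChar hLcont hIa
  have hKcont : Continuous fun x : Fin n → ℝ =>
      ((2 * Real.pi) ^ n : ℝ)⁻¹ • F (-((2 * Real.pi)⁻¹ • x)) := by
    exact (hFcont.comp ((continuous_const_smul _).neg)).const_smul (((2 * Real.pi) ^ n : ℝ)⁻¹)
  have heq : (fun x : Fin n → ℝ =>
      ((2 * Real.pi) ^ n : ℝ)⁻¹ •
        ∫ ξ : Fin n → ℝ, Complex.exp (Complex.I * ((∑ i, x i * ξ i : ℝ) : ℂ)) * a ξ) =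
      fun x => ((2 * Real.pi) ^ n : ℝ)⁻¹ • F (-((2 * Real.pi)⁻¹ • x)) := by
    funext x
    rw [hFx x]
  rw [heq]
  refine (hdecay.const_mul C).mono' hKcont.aestronglyMeasurable ?_
  filter_upwards with x
  have hfin := hbound_final x
  rw [hFx x] at hfin
  calc ‖((2 * Real.pi) ^ n : ℝ)⁻¹ • F (-((2 * Real.pi)⁻¹ • x))‖
      ≤ C * (1 + ‖x‖) ^ (-(n : ℝ) - 1) := hfin
    _ = C * (1 + ‖x‖) ^ (-((n : ℝ) + 1)) := by rw [hrpow_eq]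
end

section
/- Let a : ℝⁿ × ℝⁿ → ℂ be a symbol of class S^0 (i.e., smooth with |∂_ξ^α ∂_x^β a(x,ξ)| ≤ M_{α,β}(1+|ξ|)^{-|α|}) and suppose |a(x,ξ)| ≤ C₀ for all (x,ξ). Let C₁ > 2C₀² + 1 and define b(x,ξ) = (C₁ − |a(x,ξ)|²)^{1/2}. Then b is a symbol of class S^0 and |b(x,ξ)|² + |a(x,ξ)|² = C₁ for all (x,ξ). -/
/-- Partial derivative in the frequency variable `ξ` in direction `i`. -/
noncomputable def dXi (n : ℕ) (i : Fin n) (f : (Fin n → ℝ) → (Fin n → ℝ) → ℂ) :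
    (Fin n → ℝ) → (Fin n → ℝ) → ℂ :=
  fun x ξ => fderiv ℝ (fun ξ' => f x ξ') ξ (Pi.single i 1)

/-- Partial derivative in the space variable `x` in direction `i`. -/
noncomputable def dXx (n : ℕ) (i : Fin n) (f : (Fin n → ℝ) → (Fin n → ℝ) → ℂ) :
    (Fin n → ℝ) → (Fin n → ℝ) → ℂ :=
  fun x ξ => fderiv ℝ (fun x' => f x' ξ) x (Pi.single i 1)

/-- Multi-index (encoded as a list of coordinate directions) derivative `∂_ξ^α`. -/
noncomputable def DXi (n : ℕ) (α : List (Fin n)) (f : (Fin n → ℝ) → (Fin n → ℝ) → ℂ) :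
    (Fin n → ℝ) → (Fin n → ℝ) → ℂ :=
  α.foldr (dXi n) f

/-- Multi-index (encoded as a list of coordinate directions) derivative `∂_x^β`. -/
noncomputable def DXx (n : ℕ) (β : List (Fin n)) (f : (Fin n → ℝ) → (Fin n → ℝ) → ℂ) :
    (Fin n → ℝ) → (Fin n → ℝ) → ℂ :=
  β.foldr (dXx n) f

/-- The symbol class `S^ℓ` on `ℝⁿ × ℝⁿ`: `a` is smooth and every mixed derivative
`∂_ξ^α ∂_x^β a` is bounded by a constant times `(1+|ξ|)^{ℓ-|α|}`. -/
def IsSymbol (n : ℕ) (ℓ : ℝ) (a : (Fin n → ℝ) → (Fin n → ℝ) → ℂ) : Prop :=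
  ContDiff ℝ (⊤ : ℕ∞) (Function.uncurry a) ∧
    ∀ α β : List (Fin n), ∃ M : ℝ, ∀ x ξ : Fin n → ℝ,
      ‖DXi n α (DXx n β a) x ξ‖ ≤ M * (1 + ‖ξ‖) ^ (ℓ - (α.length : ℝ))

namespace Stmt12Aux
open Function List

variable {n : ℕ}

abbrev XX (n : ℕ) := Fin n → ℝ
abbrev FF (n : ℕ) := XX n → XX n → ℂ

/-- direction vector in `X n × X n` attached to a tagged index. -/
noncomputable def vec (n : ℕ) (j : Bool × Fin n) : XX n × XX n :=
  if j.1 then (0, Pi.single j.2 1) else (Pi.single j.2 1, 0)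

noncomputable def d (j : Bool × Fin n) (f : FF n) : FF n :=
  if j.1 then dXi n j.2 f else dXx n j.2 f

noncomputable def D (γ : List (Bool × Fin n)) (f : FF n) : FF n := γ.foldr d f

def Sm (f : FF n) : Prop := ContDiff ℝ (⊤ : ℕ∞) (uncurry f)

lemma Sm.diffUncurry {f : FF n} (hf : Sm f) : Differentiable ℝ (uncurry f) :=
  hf.differentiable (by simp)

/-- `d j f` is the directional derivative of `uncurry f` in direction `vec n j`. -/
lemma d_eq_fderiv {f : FF n} (hf : Sm f) (j : Bool × Fin n) (x ξ : XX n) :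
    d j f x ξ = fderiv ℝ (uncurry f) (x, ξ) (vec n j) := by
  obtain ⟨b, i⟩ := j
  cases b
  · -- x-derivative
    have h1 : HasFDerivAt (fun x' : XX n => (x', ξ))
        ((ContinuousLinearMap.id ℝ (XX n)).prod 0) x :=
      HasFDerivAt.prodMk (hasFDerivAt_id x) (hasFDerivAt_const ξ x)
    have h2 : HasFDerivAt (uncurry f) (fderiv ℝ (uncurry f) (x, ξ)) (x, ξ) :=
      (hf.diffUncurry (x, ξ)).hasFDerivAt
    have h3 : HasFDerivAt (fun x' => f x' ξ)
        ((fderiv ℝ (uncurry f) (x, ξ)).comp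
          ((ContinuousLinearMap.id ℝ (XX n)).prod 0)) x := by
      have := h2.comp x h1; exact this
    have hd : d (false, i) f = dXx n i f := rfl
    rw [hd]
    show fderiv ℝ (fun x' => f x' ξ) x (Pi.single i 1) = _
    rw [h3.fderiv]
    simp [vec]
  · -- ξ-derivative
    have h1 : HasFDerivAt (fun ξ' : XX n => (x, ξ'))
        (ContinuousLinearMap.inr ℝ (XX n) (XX n)) ξ := hasFDerivAt_prodMk_right x ξ
    have h2 : HasFDerivAt (uncurry f) (fderiv ℝ (uncurry f) (x, ξ)) (x, ξ) :=
      (hf.diffUncurry (x, ξ)).hasFDerivAt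
    have h3 : HasFDerivAt (fun ξ' => f x ξ')
        ((fderiv ℝ (uncurry f) (x, ξ)).comp
          (ContinuousLinearMap.inr ℝ (XX n) (XX n))) ξ := h2.comp ξ h1
    have hd : d (true, i) f = dXi n i f := rfl
    rw [hd]
    show fderiv ℝ (fun ξ' => f x ξ') ξ (Pi.single i 1) = _
    rw [h3.fderiv]
    simp [vec]

lemma Sm_d {f : FF n} (hf : Sm f) (j : Bool × Fin n) : Sm (d j f) := by
  have he : uncurry (d j f) = fun p => fderiv ℝ (uncurry f) p (vec n j) := by
    funext p
    exact d_eq_fderiv hf j p.1 p.2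
  rw [Sm, he]
  exact (hf.fderiv_right (le_refl _)).clm_apply contDiff_const

lemma Sm_D {f : FF n} (hf : Sm f) (γ : List (Bool × Fin n)) : Sm (D γ f) := by
  induction γ with
  | nil => exact hf
  | cons j γ ih => exact Sm_d ih j

lemma Sm_add {f g : FF n} (hf : Sm f) (hg : Sm g) : Sm (f + g) := hf.add hg
lemma Sm_sub {f g : FF n} (hf : Sm f) (hg : Sm g) : Sm (f - g) := hf.sub hg
lemma Sm_mul {f g : FF n} (hf : Sm f) (hg : Sm g) : Sm (f * g) := hf.mul hg
lemma Sm_const (c : ℂ) : Sm (fun (_ _ : XX n) => c) := contDiff_const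

lemma d_add {f g : FF n} (hf : Sm f) (hg : Sm g) (j : Bool × Fin n) :
    d j (f + g) = d j f + d j g := by
  funext x ξ
  have h1 : d j (f + g) x ξ = fderiv ℝ (uncurry (f + g)) (x, ξ) (vec n j) :=
    d_eq_fderiv (Sm_add hf hg) j x ξ
  have h2 : uncurry (f + g) = fun p => uncurry f p + uncurry g p := rfl
  rw [h1, h2, fderiv_fun_add (hf.diffUncurry _) (hg.diffUncurry _)]
  simp only [Pi.add_apply, ContinuousLinearMap.add_apply]
  rw [← d_eq_fderiv hf j x ξ, ← d_eq_fderiv hg j x ξ]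

lemma d_mul {f g : FF n} (hf : Sm f) (hg : Sm g) (j : Bool × Fin n) :
    d j (f * g) = d j f * g + f * d j g := by
  funext x ξ
  have h1 : d j (f * g) x ξ = fderiv ℝ (uncurry (f * g)) (x, ξ) (vec n j) :=
    d_eq_fderiv (Sm_mul hf hg) j x ξ
  have h2 : uncurry (f * g) = fun p => uncurry f p * uncurry g p := rfl
  rw [h1, h2, fderiv_fun_mul (hf.diffUncurry _) (hg.diffUncurry _)]
  simp only [ContinuousLinearMap.add_apply, ContinuousLinearMap.smul_apply, smul_eq_mul]
  rw [← d_eq_fderiv hf j x ξ, ← d_eq_fderiv hg j x ξ]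
  show f x ξ * d j g x ξ + g x ξ * d j f x ξ
    = d j f x ξ * g x ξ + f x ξ * d j g x ξ
  ring

lemma d_const (c : ℂ) (j : Bool × Fin n) : d j (fun (_ _ : XX n) => c) = 0 := by
  funext x ξ
  have h1 : d j (fun (_ _ : XX n) => c) x ξ
      = fderiv ℝ (uncurry (fun (_ _ : XX n) => c)) (x, ξ) (vec n j) :=
    d_eq_fderiv (Sm_const c) j x ξ
  have h2 : uncurry (fun (_ _ : XX n) => c) = fun (_ : XX n × XX n) => c := rfl
  rw [h1, h2, fderiv_fun_const]
  simp

lemma Sm_sum (L : List (FF n)) (h : ∀ f ∈ L, Sm f) : Sm L.sum := by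
  induction L with
  | nil => exact Sm_const 0
  | cons f L ih =>
    rw [List.sum_cons]
    exact Sm_add (h f (List.mem_cons_self)) (ih fun g hg => h g (List.mem_cons_of_mem _ hg))

lemma d_sum (L : List (FF n)) (h : ∀ f ∈ L, Sm f) (j : Bool × Fin n) :
    d j L.sum = (L.map (d j)).sum := by
  induction L with
  | nil =>
    simp only [List.sum_nil, List.map_nil]
    exact d_const 0 j
  | cons f L ih =>
    rw [List.sum_cons, List.map_cons, List.sum_cons,
      d_add (h f (List.mem_cons_self)) (Sm_sum L fun g hg => h g (List.mem_cons_of_mem _ hg)) j,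
      ih fun g hg => h g (List.mem_cons_of_mem _ hg)]

/-- All ways to split a list of derivative directions between two factors. -/
def splits (γ : List (Bool × Fin n)) :
    List (List (Bool × Fin n) × List (Bool × Fin n)) :=
  γ.foldr (fun j s => s.map (fun p => (j :: p.1, p.2)) ++ s.map (fun p => (p.1, j :: p.2)))
    [([], [])]

lemma splits_nil : splits ([] : List (Bool × Fin n)) = [([], [])] := rfl

lemma splits_cons (j : Bool × Fin n) (γ : List (Bool × Fin n)) :
    splits (j :: γ) = (splits γ).map (fun p => (j :: p.1, p.2))
      ++ (splits γ).map (fun p => (p.1, j :: p.2)) := rfl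

lemma splits_countP (q : Bool × Fin n → Bool) (γ : List (Bool × Fin n)) :
    ∀ p ∈ splits γ, p.1.countP q + p.2.countP q = γ.countP q := by
  induction γ with
  | nil => intro p hp; simp [splits_nil] at hp; simp [hp]
  | cons j γ ih =>
    intro p hp
    rw [splits_cons] at hp
    rcases List.mem_append.1 hp with h | h <;>
      obtain ⟨q', hq', rfl⟩ := List.mem_map.1 h <;>
      simp only [List.countP_cons] <;>
      have := ih q' hq' <;> omega

/-- Leibniz formula for iterated mixed partial derivatives of a product. -/
lemma D_mul {f g : FF n} (hf : Sm f) (hg : Sm g) (γ : List (Bool × Fin n)) :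
    D γ (f * g) = ((splits γ).map (fun p => D p.1 f * D p.2 g)).sum := by
  induction γ with
  | nil => simp [D, splits_nil]
  | cons j γ ih =>
    have hterm : ∀ p ∈ splits γ, Sm (D p.1 f * D p.2 g) := fun p _ =>
      Sm_mul (Sm_D hf p.1) (Sm_D hg p.2)
    have h1 : D (j :: γ) (f * g) = d j (D γ (f * g)) := rfl
    rw [h1, ih, d_sum _ (by
        intro h hh
        obtain ⟨p, hp, rfl⟩ := List.mem_map.1 hh
        exact hterm p hp), List.map_map]
    have h2 : ∀ p ∈ splits γ,
        (d j ∘ fun p => D p.1 f * D p.2 g) p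
          = D (j :: p.1) f * D p.2 g + D p.1 f * D (j :: p.2) g := by
      intro p _
      exact d_mul (Sm_D hf p.1) (Sm_D hg p.2) j
    rw [List.map_congr_left h2, splits_cons, List.map_append, List.sum_append,
      List.map_map, List.map_map]
    have h3 : ((splits γ).map (fun p => D (j :: p.1) f * D p.2 g + D p.1 f * D (j :: p.2) g)).sum
        = ((splits γ).map ((fun p => D p.1 f * D p.2 g) ∘ fun p => (j :: p.1, p.2))).sum
          + ((splits γ).map ((fun p => D p.1 f * D p.2 g) ∘ fun p => (p.1, j :: p.2))).sum := by
      induction splits γ with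
      | nil => simp
      | cons p L ihL =>
        simp only [List.map_cons, List.sum_cons, Function.comp] at ihL ⊢
        rw [ihL]
        abel
    rw [h3]

/-- Second-order mixed partial derivatives commute for smooth functions (Schwarz). -/
lemma d_comm {f : FF n} (hf : Sm f) (j k : Bool × Fin n) :
    d j (d k f) = d k (d j f) := by
  have hdf : Differentiable ℝ (fderiv ℝ (uncurry f)) :=
    (hf.fderiv_right (m := (⊤ : ℕ∞)) (by simp)).differentiable (by simp)
  have key : ∀ (v w : XX n × XX n) (x ξ : XX n),
      fderiv ℝ (fun q => fderiv ℝ (uncurry f) q v) (x, ξ) w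
        = fderiv ℝ (fderiv ℝ (uncurry f)) (x, ξ) w v := by
    intro v w x ξ
    have hc : (fun q => fderiv ℝ (uncurry f) q v)
        = (ContinuousLinearMap.apply ℝ ℂ v) ∘ (fderiv ℝ (uncurry f)) := rfl
    rw [hc, ((ContinuousLinearMap.apply ℝ ℂ v).hasFDerivAt.comp (x, ξ)
      (hdf (x, ξ)).hasFDerivAt).fderiv]
    rfl
  have hsym : ∀ (x ξ : XX n), IsSymmSndFDerivAt ℝ (uncurry f) (x, ξ) :=
    fun x ξ => (hf.contDiffAt).isSymmSndFDerivAt (by rw [minSmoothness_of_isRCLikeNormedField]; exact WithTop.coe_le_coe.mpr (le_top : (2 : ℕ∞) ≤ ⊤))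
  funext x ξ
  rw [d_eq_fderiv (Sm_d hf k) j x ξ, d_eq_fderiv (Sm_d hf j) k x ξ]
  have e1 : uncurry (d k f) = fun q => fderiv ℝ (uncurry f) q (vec n k) := by
    funext q; exact d_eq_fderiv hf k q.1 q.2
  have e2 : uncurry (d j f) = fun q => fderiv ℝ (uncurry f) q (vec n j) := by
    funext q; exact d_eq_fderiv hf j q.1 q.2
  rw [e1, e2, key (vec n k) (vec n j) x ξ, key (vec n j) (vec n k) x ξ]
  exact hsym x ξ (vec n j) (vec n k)

/-- `D` only depends on the multiset of directions. -/
lemma D_perm {f : FF n} (hf : Sm f) {γ γ' : List (Bool × Fin n)} (h : γ.Perm γ') :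
    D γ f = D γ' f := by
  induction h with
  | nil => rfl
  | cons j _ ih =>
    show d j (D _ f) = d j (D _ f)
    rw [ih]
  | swap j k γ =>
    show d k (d j (D γ f)) = d j (d k (D γ f))
    exact d_comm (Sm_D hf γ) k j
  | trans _ _ ih1 ih2 => rw [ih1, ih2]

/-- number of `ξ`-derivatives in a tagged list -/
def wt (γ : List (Bool × Fin n)) : ℕ := γ.countP (·.1)

/-- Uniform symbol-of-order-0 estimates over all tagged derivative lists. -/
def Est (f : FF n) : Prop :=
  ∀ γ : List (Bool × Fin n), ∃ M : ℝ, ∀ x ξ : XX n,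
    ‖D γ f x ξ‖ ≤ M * (1 + ‖ξ‖) ^ (-(wt γ : ℝ))

lemma DXi_DXx_eq_D (f : FF n) (α β : List (Fin n)) :
    DXi n α (DXx n β f)
      = D (α.map (fun i => ((true : Bool), i)) ++ β.map (fun i => ((false : Bool), i))) f := by
  rw [D, List.foldr_append, List.foldr_map, List.foldr_map]
  rfl

lemma map_tag_filter_true (γ : List (Bool × Fin n)) :
    ((γ.filter (·.1)).map Prod.snd).map (fun i => ((true : Bool), i)) = γ.filter (·.1) := by
  rw [List.map_map]
  have h : ∀ e ∈ γ.filter (·.1), ((fun i => ((true : Bool), i)) ∘ Prod.snd) e = e := by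
    intro e he
    have := List.of_mem_filter he
    simp only [Function.comp_apply]
    ext
    · simpa using this.symm
    · rfl
  exact (List.map_congr_left h).trans (List.map_id _)

lemma map_tag_filter_false (γ : List (Bool × Fin n)) :
    ((γ.filter (fun e => !e.1)).map Prod.snd).map (fun i => ((false : Bool), i))
      = γ.filter (fun e => !e.1) := by
  rw [List.map_map]
  have h : ∀ e ∈ γ.filter (fun e => !e.1),
      ((fun i => ((false : Bool), i)) ∘ Prod.snd) e = e := by
    intro e he
    have := List.of_mem_filter he
    simp only [Function.comp_apply]
    ext
    · simp only [Bool.not_eq_true'] at this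
      simp [this]
    · rfl
  exact (List.map_congr_left h).trans (List.map_id _)

/-- any tagged derivative of a smooth function can be written in canonical order -/
lemma D_eq_canonical {f : FF n} (hf : Sm f) (γ : List (Bool × Fin n)) :
    D γ f = DXi n ((γ.filter (·.1)).map Prod.snd) (DXx n ((γ.filter (fun e => !e.1)).map Prod.snd) f) := by
  rw [DXi_DXx_eq_D, map_tag_filter_true, map_tag_filter_false]
  exact D_perm hf (List.filter_append_perm _ γ).symm

lemma est_of_isSymbol {a : FF n} (ha : IsSymbol n 0 a) : Est a := by
  intro γ
  obtain ⟨M, hM⟩ := ha.2 ((γ.filter (·.1)).map Prod.snd) ((γ.filter (fun e => !e.1)).map Prod.snd)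
  refine ⟨M, fun x ξ => ?_⟩
  have h1 := hM x ξ
  rw [D_eq_canonical ha.1 γ]
  convert h1 using 3
  rw [List.length_map, wt, List.countP_eq_length_filter]
  ring

lemma isSymbol_of_est {f : FF n} (hsm : Sm f) (hest : Est f) : IsSymbol n 0 f := by
  refine ⟨hsm, fun α β => ?_⟩
  obtain ⟨M, hM⟩ := hest
    (α.map (fun i => ((true : Bool), i)) ++ β.map (fun i => ((false : Bool), i)))
  refine ⟨M, fun x ξ => ?_⟩
  have h1 := hM x ξ
  rw [DXi_DXx_eq_D]
  have hwt : wt (α.map (fun i => ((true : Bool), i)) ++ β.map (fun i => ((false : Bool), i)))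
      = α.length := by
    rw [wt, List.countP_append, List.countP_map, List.countP_map]
    show α.countP (Function.const _ true) + β.countP (Function.const _ false) = _
    rw [show (Function.const (Fin n) true) = fun _ => true from rfl,
      show (Function.const (Fin n) false) = fun _ => false from rfl,
      List.countP_true, List.countP_false]
    rfl
  have hexp : (0 : ℝ) - (α.length : ℝ)
      = -(wt (α.map (fun i => ((true : Bool), i)) ++ β.map (fun i => ((false : Bool), i))) : ℝ) := by
    rw [hwt]; ring
  rw [hexp]
  exact h1

lemma d_sub {f g : FF n} (hf : Sm f) (hg : Sm g) (j : Bool × Fin n) :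
    d j (f - g) = d j f - d j g := by
  funext x ξ
  have h1 : d j (f - g) x ξ = fderiv ℝ (uncurry (f - g)) (x, ξ) (vec n j) :=
    d_eq_fderiv (Sm_sub hf hg) j x ξ
  have h2 : uncurry (f - g) = fun p => uncurry f p - uncurry g p := rfl
  rw [h1, h2, fderiv_fun_sub (hf.diffUncurry _) (hg.diffUncurry _)]
  simp only [Pi.sub_apply, ContinuousLinearMap.sub_apply]
  rw [← d_eq_fderiv hf j x ξ, ← d_eq_fderiv hg j x ξ]

lemma D_sub {f g : FF n} (hf : Sm f) (hg : Sm g) (γ : List (Bool × Fin n)) :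
    D γ (f - g) = D γ f - D γ g := by
  induction γ with
  | nil => rfl
  | cons j γ ih =>
    show d j (D γ (f - g)) = d j (D γ f) - d j (D γ g)
    rw [ih, d_sub (Sm_D hf γ) (Sm_D hg γ) j]

lemma D_const_ne (c : ℂ) {γ : List (Bool × Fin n)} (h : γ ≠ []) :
    D γ (fun (_ _ : XX n) => c) = 0 := by
  induction γ with
  | nil => exact absurd rfl h
  | cons j γ ih =>
    show d j (D γ (fun (_ _ : XX n) => c)) = 0
    rcases eq_or_ne γ [] with rfl | hγ
    · exact d_const c j
    · rw [ih hγ]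
      exact d_const 0 j

lemma one_add_norm_pos (ξ : XX n) : (0 : ℝ) < 1 + ‖ξ‖ := by positivity

lemma Est_const (c : ℂ) : Est (fun (_ _ : XX n) => c) := by
  intro γ
  rcases eq_or_ne γ [] with rfl | hγ
  · refine ⟨‖c‖, fun x ξ => ?_⟩
    show ‖c‖ ≤ _
    rw [show (-(wt ([] : List (Bool × Fin n)) : ℝ)) = 0 by simp [wt], Real.rpow_zero, mul_one]
  · refine ⟨0, fun x ξ => ?_⟩
    rw [D_const_ne c hγ]
    simp

lemma Est_sub {f g : FF n} (hf : Sm f) (hg : Sm g) (ef : Est f) (eg : Est g) :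
    Est (f - g) := by
  intro γ
  obtain ⟨M₁, h₁⟩ := ef γ
  obtain ⟨M₂, h₂⟩ := eg γ
  refine ⟨M₁ + M₂, fun x ξ => ?_⟩
  rw [D_sub hf hg γ]
  calc ‖(D γ f - D γ g) x ξ‖ = ‖D γ f x ξ - D γ g x ξ‖ := rfl
    _ ≤ ‖D γ f x ξ‖ + ‖D γ g x ξ‖ := norm_sub_le _ _
    _ ≤ M₁ * (1 + ‖ξ‖) ^ (-(wt γ : ℝ)) + M₂ * (1 + ‖ξ‖) ^ (-(wt γ : ℝ)) :=
        add_le_add (h₁ x ξ) (h₂ x ξ)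
    _ = (M₁ + M₂) * (1 + ‖ξ‖) ^ (-(wt γ : ℝ)) := by ring

lemma sum_apply (L : List (FF n)) (x ξ : XX n) :
    L.sum x ξ = (L.map (fun f => f x ξ)).sum := by
  induction L with
  | nil => rfl
  | cons f L ih =>
    rw [List.sum_cons, List.map_cons, List.sum_cons, ← ih]
    rfl

lemma norm_list_sum_le (L : List ℂ) : ‖L.sum‖ ≤ (L.map norm).sum := by
  induction L with
  | nil => simp
  | cons z L ih =>
    rw [List.sum_cons, List.map_cons, List.sum_cons]
    exact (norm_add_le _ _).trans (by linarith)

lemma Est_mul {f g : FF n} (hf : Sm f) (hg : Sm g) (ef : Est f) (eg : Est g) :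
    Est (f * g) := by
  intro γ
  choose Mf hMf using ef
  choose Mg hMg using eg
  refine ⟨((splits γ).map (fun p => |Mf p.1| * |Mg p.2|)).sum, fun x ξ => ?_⟩
  have wpos : (0 : ℝ) < 1 + ‖ξ‖ := one_add_norm_pos ξ
  rw [D_mul hf hg γ, sum_apply, List.map_map]
  calc ‖(((splits γ).map ((fun h => h x ξ) ∘ fun p => D p.1 f * D p.2 g))).sum‖
      ≤ (((splits γ).map ((fun h => h x ξ) ∘ fun p => D p.1 f * D p.2 g)).map norm).sum :=
        norm_list_sum_le _
    _ ≤ ((splits γ).map (fun p => (|Mf p.1| * |Mg p.2|) * (1 + ‖ξ‖) ^ (-(wt γ : ℝ)))).sum := by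
        rw [List.map_map]
        refine List.sum_le_sum ?_
        intro p hp
        have hb1 : ‖D p.1 f x ξ‖ ≤ |Mf p.1| * (1 + ‖ξ‖) ^ (-(wt p.1 : ℝ)) :=
          (hMf p.1 x ξ).trans (by
            have : Mf p.1 ≤ |Mf p.1| := le_abs_self _
            exact mul_le_mul_of_nonneg_right this (Real.rpow_nonneg wpos.le _))
        have hb2 : ‖D p.2 g x ξ‖ ≤ |Mg p.2| * (1 + ‖ξ‖) ^ (-(wt p.2 : ℝ)) :=
          (hMg p.2 x ξ).trans (by
            have : Mg p.2 ≤ |Mg p.2| := le_abs_self _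
            exact mul_le_mul_of_nonneg_right this (Real.rpow_nonneg wpos.le _))
        have hcount := splits_countP (·.1) γ p hp
        show ‖(D p.1 f * D p.2 g) x ξ‖ ≤ _
        have hnorm : ‖(D p.1 f * D p.2 g) x ξ‖ = ‖D p.1 f x ξ‖ * ‖D p.2 g x ξ‖ := norm_mul _ _
        rw [hnorm]
        calc ‖D p.1 f x ξ‖ * ‖D p.2 g x ξ‖
            ≤ (|Mf p.1| * (1 + ‖ξ‖) ^ (-(wt p.1 : ℝ))) * (|Mg p.2| * (1 + ‖ξ‖) ^ (-(wt p.2 : ℝ))) :=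
              mul_le_mul hb1 hb2 (norm_nonneg _) (by positivity)
          _ = (|Mf p.1| * |Mg p.2|) * ((1 + ‖ξ‖) ^ (-(wt p.1 : ℝ)) * (1 + ‖ξ‖) ^ (-(wt p.2 : ℝ))) := by
              ring
          _ = (|Mf p.1| * |Mg p.2|) * (1 + ‖ξ‖) ^ (-(wt γ : ℝ)) := by
              rw [← Real.rpow_add wpos]
              congr 1
              simp only [wt]
              rw [← hcount]
              push_cast
              ring
    _ = (((splits γ).map (fun p => |Mf p.1| * |Mg p.2|)).sum) * (1 + ‖ξ‖) ^ (-(wt γ : ℝ)) := by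
        rw [← List.sum_map_mul_right]

lemma splits_structure :
    ∀ (γ : List (Bool × Fin n)), γ ≠ [] →
      ∃ L, splits γ = (γ, ([] : List (Bool × Fin n))) :: (L ++ [(([] : List (Bool × Fin n)), γ)])
        ∧ ∀ p ∈ L, p.1 ≠ [] ∧ p.2 ≠ [] := by
  intro γ
  induction γ with
  | nil => intro h; exact absurd rfl h
  | cons j γ ih =>
    intro _
    rcases eq_or_ne γ [] with rfl | hγ
    · exact ⟨[], by simp [splits_cons, splits_nil], by simp⟩
    · obtain ⟨L, hL, hP⟩ := ih hγ
      refine ⟨(L.map (fun p => (j :: p.1, p.2))) ++ ([([j], γ), (γ, [j])]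
          ++ L.map (fun p => (p.1, j :: p.2))), ?_, ?_⟩
      · rw [splits_cons, hL]
        simp only [List.map_cons, List.map_append, List.cons_append, List.append_assoc,
          List.singleton_append, List.nil_append, List.map_map]
        rfl
      · intro p hp
        simp only [List.mem_append, List.mem_map, List.mem_cons, List.mem_singleton] at hp
        rcases hp with ⟨q, hq, rfl⟩ | ((rfl | rfl | h) | ⟨q, hq, rfl⟩)
        · exact ⟨List.cons_ne_nil _ _, (hP q hq).2⟩
        · exact ⟨List.cons_ne_nil _ _, hγ⟩
        · exact ⟨hγ, List.cons_ne_nil _ _⟩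
        · exact absurd h List.not_mem_nil
        · exact ⟨(hP q hq).1, List.cons_ne_nil _ _⟩

/-- complex conjugation of a two-variable function -/
def cj (f : FF n) : FF n := fun x ξ => (starRingEnd ℂ) (f x ξ)

lemma Sm_cj {f : FF n} (hf : Sm f) : Sm (cj f) := by
  have : uncurry (cj f) = fun p => Complex.conjCLE (uncurry f p) := rfl
  rw [Sm, this]
  exact (Complex.conjCLE.toContinuousLinearMap.contDiff).comp hf

lemma d_cj {f : FF n} (hf : Sm f) (j : Bool × Fin n) : d j (cj f) = cj (d j f) := by
  funext x ξ
  rw [d_eq_fderiv (Sm_cj hf) j x ξ]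
  have h1 : uncurry (cj f)
      = (Complex.conjCLE.toContinuousLinearMap : ℂ →L[ℝ] ℂ) ∘ uncurry f := rfl
  rw [h1, ((Complex.conjCLE.toContinuousLinearMap :
      ℂ →L[ℝ] ℂ).hasFDerivAt.comp (x, ξ) (hf.diffUncurry (x, ξ)).hasFDerivAt).fderiv]
  show (starRingEnd ℂ) (fderiv ℝ (uncurry f) (x, ξ) (vec n j)) = _
  rw [cj, ← d_eq_fderiv hf j x ξ]

lemma D_cj {f : FF n} (hf : Sm f) (γ : List (Bool × Fin n)) : D γ (cj f) = cj (D γ f) := by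
  induction γ with
  | nil => rfl
  | cons j γ ih =>
    show d j (D γ (cj f)) = cj (d j (D γ f))
    rw [ih, d_cj (Sm_D hf γ) j]

lemma Est_cj {f : FF n} (hf : Sm f) (ef : Est f) : Est (cj f) := by
  intro γ
  obtain ⟨M, hM⟩ := ef γ
  refine ⟨M, fun x ξ => ?_⟩
  rw [D_cj hf γ]
  have : ‖cj (D γ f) x ξ‖ = ‖D γ f x ξ‖ := by
    simp [cj]
  rw [this]
  exact hM x ξ

/-- Key lemma: if `b² = u` with `u` a symbol, `b` smooth, `‖b‖ ≥ 1` and `b` bounded,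
then `b` satisfies the `S⁰` estimates. -/
lemma Est_sqrt {b u : FF n} (hsb : Sm b) (hsu : Sm u) (hu : Est u)
    (hbu : b * b = u) (hb1 : ∀ x ξ, 1 ≤ ‖b x ξ‖) (B : ℝ) (hbB : ∀ x ξ, ‖b x ξ‖ ≤ B) :
    Est b := by
  have main : ∀ m : ℕ, ∀ γ : List (Bool × Fin n), γ.length ≤ m →
      ∃ M : ℝ, ∀ x ξ : XX n, ‖D γ b x ξ‖ ≤ M * (1 + ‖ξ‖) ^ (-(wt γ : ℝ)) := by
    intro m
    induction m with
    | zero =>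
      intro γ hγ
      rw [Nat.le_zero, List.length_eq_zero_iff] at hγ
      subst hγ
      refine ⟨B, fun x ξ => ?_⟩
      rw [show (-(wt ([] : List (Bool × Fin n)) : ℝ)) = 0 by simp [wt], Real.rpow_zero, mul_one]
      exact hbB x ξ
    | succ m ih =>
      intro γ hγ
      rcases Nat.lt_or_ge γ.length (m + 1) with hlt | hge
      · exact ih γ (Nat.lt_succ_iff.mp hlt)
      have hlen : γ.length = m + 1 := le_antisymm hγ hge
      have hγne : γ ≠ [] := by
        intro h; rw [h] at hlen; simp at hlen
      -- extract constants from the inductive hypothesis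
      choose Mb hMb using ih
      set N : List (Bool × Fin n) → ℝ :=
        fun δ => if h : δ.length ≤ m then |Mb δ h| else 0 with hN
      have hNnonneg : ∀ δ, 0 ≤ N δ := by
        intro δ; rw [hN]; dsimp only
        split
        · exact abs_nonneg _
        · exact le_rfl
      have hNbound : ∀ δ (h : δ.length ≤ m) (x ξ : XX n),
          ‖D δ b x ξ‖ ≤ N δ * (1 + ‖ξ‖) ^ (-(wt δ : ℝ)) := by
        intro δ h x ξ
        rw [hN]; dsimp only
        rw [dif_pos h]
        refine (hMb δ h x ξ).trans ?_
        have wpos : (0 : ℝ) < 1 + ‖ξ‖ := one_add_norm_pos ξ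
        exact mul_le_mul_of_nonneg_right (le_abs_self _) (Real.rpow_nonneg wpos.le _)
      obtain ⟨L, hL, hLprop⟩ := splits_structure γ hγne
      obtain ⟨Mu, hMu⟩ := hu γ
      -- the Leibniz identity
      have hsum : D γ u = ((splits γ).map (fun p => D p.1 b * D p.2 b)).sum := by
        rw [← hbu]; exact D_mul hsb hsb γ
      rw [hL] at hsum
      have hsum2 : D γ u = (D γ b * b)
          + ((L.map (fun p => D p.1 b * D p.2 b)).sum + b * D γ b) := by
        rw [hsum, List.map_cons, List.sum_cons, List.map_append, List.sum_append]
        simp only [List.map_cons, List.map_nil, List.sum_cons, List.sum_nil, add_zero]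
        rfl
      -- membership facts for L
      have hmemL : ∀ p ∈ L, p.1.length ≤ m ∧ p.2.length ≤ m
          ∧ wt p.1 + wt p.2 = wt γ := by
        intro p hp
        have hmem : p ∈ splits γ := by
          rw [hL]; simp only [List.mem_cons, List.mem_append]
          tauto
        have h1 : p.1.countP (fun _ => true) + p.2.countP (fun _ => true)
            = γ.countP (fun _ => true) := splits_countP _ γ p hmem
        simp only [List.countP_true] at h1
        have h2 := (hLprop p hp).1
        have h3 := (hLprop p hp).2
        have h4 : 1 ≤ p.1.length := List.length_pos_iff.mpr h2
        have h5 : 1 ≤ p.2.length := List.length_pos_iff.mpr h3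
        refine ⟨by omega, by omega, splits_countP (·.1) γ p hmem⟩
      set T : ℝ := (L.map (fun p => N p.1 * N p.2)).sum with hT
      refine ⟨(|Mu| + T) / 2, fun x ξ => ?_⟩
      have wpos : (0 : ℝ) < 1 + ‖ξ‖ := one_add_norm_pos ξ
      set w : ℝ := (1 + ‖ξ‖) ^ (-(wt γ : ℝ)) with hw
      have wnn : 0 ≤ w := Real.rpow_nonneg wpos.le _
      -- pointwise identity
      have hpt : b x ξ * D γ b x ξ * 2
          = D γ u x ξ - (L.map (fun p => D p.1 b * D p.2 b)).sum x ξ := by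
        have := congrFun (congrFun hsum2 x) ξ
        simp only [Pi.add_apply, Pi.mul_apply] at this
        rw [this]; ring
      -- norm bound on the middle sum
      have hmid : ‖(L.map (fun p => D p.1 b * D p.2 b)).sum x ξ‖ ≤ T * w := by
        rw [sum_apply, List.map_map]
        refine (norm_list_sum_le _).trans ?_
        rw [List.map_map]
        have step : (L.map (norm ∘ (fun h => h x ξ) ∘ fun p => D p.1 b * D p.2 b)).sum
            ≤ (L.map (fun p => N p.1 * N p.2 * w)).sum := by
          refine List.sum_le_sum ?_
          intro p hp
          obtain ⟨hl1, hl2, hwt⟩ := hmemL p hp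
          show ‖(D p.1 b * D p.2 b) x ξ‖ ≤ N p.1 * N p.2 * w
          have hnorm : ‖(D p.1 b * D p.2 b) x ξ‖ = ‖D p.1 b x ξ‖ * ‖D p.2 b x ξ‖ :=
            norm_mul _ _
          rw [hnorm]
          calc ‖D p.1 b x ξ‖ * ‖D p.2 b x ξ‖
              ≤ (N p.1 * (1 + ‖ξ‖) ^ (-(wt p.1 : ℝ)))
                * (N p.2 * (1 + ‖ξ‖) ^ (-(wt p.2 : ℝ))) :=
                mul_le_mul (hNbound p.1 hl1 x ξ) (hNbound p.2 hl2 x ξ) (norm_nonneg _)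
                  (mul_nonneg (hNnonneg p.1) (Real.rpow_nonneg wpos.le _))
            _ = N p.1 * N p.2 * ((1 + ‖ξ‖) ^ (-(wt p.1 : ℝ)) * (1 + ‖ξ‖) ^ (-(wt p.2 : ℝ))) := by
                ring
            _ = N p.1 * N p.2 * w := by
                rw [← Real.rpow_add wpos, hw]
                congr 1
                rw [← hwt]
                push_cast
                ring
        refine step.trans ?_
        rw [hT, ← List.sum_map_mul_right]
      -- conclude
      have hDu : ‖D γ u x ξ‖ ≤ |Mu| * w := by
        refine (hMu x ξ).trans ?_
        exact mul_le_mul_of_nonneg_right (le_abs_self _) wnn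
      have h2b : 2 * ‖D γ b x ξ‖ ≤ ‖b x ξ * D γ b x ξ * 2‖ := by
        rw [norm_mul, norm_mul]
        have h1 := hb1 x ξ
        have h2 : ‖(2 : ℂ)‖ = 2 := by simp
        rw [h2]
        nlinarith [norm_nonneg (D γ b x ξ)]
      have h3b : ‖b x ξ * D γ b x ξ * 2‖ ≤ |Mu| * w + T * w := by
        rw [hpt]
        exact (norm_sub_le _ _).trans (add_le_add hDu hmid)
      have := h2b.trans h3b
      calc ‖D γ b x ξ‖ ≤ (|Mu| * w + T * w) / 2 := by linarith
        _ = (|Mu| + T) / 2 * w := by ring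
  intro γ
  exact main γ.length γ le_rfl

end Stmt12Aux

open Stmt12Aux in
theorem stmt_12 (n : ℕ) (a : (Fin n → ℝ) → (Fin n → ℝ) → ℂ)
    (ha : IsSymbol n 0 a) (C₀ : ℝ) (hbd : ∀ x ξ, ‖a x ξ‖ ≤ C₀)
    (C₁ : ℝ) (hC₁ : 2 * C₀ ^ 2 + 1 < C₁) :
    IsSymbol n 0 (fun x ξ => (Real.sqrt (C₁ - ‖a x ξ‖ ^ 2) : ℂ)) ∧
      ∀ x ξ : Fin n → ℝ, Real.sqrt (C₁ - ‖a x ξ‖ ^ 2) ^ 2 + ‖a x ξ‖ ^ 2 = C₁ := by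
  classical
  have h0 : 0 ≤ C₀ := le_trans (norm_nonneg _) (hbd 0 0)
  have hr : ∀ x ξ, 1 ≤ C₁ - ‖a x ξ‖ ^ 2 := by
    intro x ξ
    have h1 := hbd x ξ
    have h2 := norm_nonneg (a x ξ)
    nlinarith
  have hrpos : ∀ x ξ, 0 < C₁ - ‖a x ξ‖ ^ 2 := fun x ξ => lt_of_lt_of_le one_pos (hr x ξ)
  -- part 2
  have part2 : ∀ x ξ : Fin n → ℝ, Real.sqrt (C₁ - ‖a x ξ‖ ^ 2) ^ 2 + ‖a x ξ‖ ^ 2 = C₁ := by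
    intro x ξ
    rw [Real.sq_sqrt (hrpos x ξ).le]
    ring
  set b : FF n := fun x ξ => (Real.sqrt (C₁ - ‖a x ξ‖ ^ 2) : ℂ) with hbdef
  set u : FF n := (fun _ _ => (C₁ : ℂ)) - a * cj a with hudef
  -- smoothness of b
  have hg : ContDiff ℝ (⊤ : ℕ∞) (fun p : XX n × XX n => C₁ - ‖a p.1 p.2‖ ^ 2) := by
    have he : (fun p : XX n × XX n => C₁ - ‖a p.1 p.2‖ ^ 2)
        = fun p => C₁ - ((Complex.reCLM (Function.uncurry a p)) * (Complex.reCLM (Function.uncurry a p))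
          + (Complex.imCLM (Function.uncurry a p)) * (Complex.imCLM (Function.uncurry a p))) := by
      funext p
      rw [Complex.sq_norm, Complex.normSq_apply]
      rfl
    rw [he]
    exact contDiff_const.sub
      (((Complex.reCLM.contDiff.comp ha.1).mul (Complex.reCLM.contDiff.comp ha.1)).add
        ((Complex.imCLM.contDiff.comp ha.1).mul (Complex.imCLM.contDiff.comp ha.1)))
  have hsb : Sm b := by
    rw [Sm, contDiff_iff_contDiffAt]
    intro p
    have h1 : ContDiffAt ℝ (⊤ : ℕ∞) Real.sqrt (C₁ - ‖a p.1 p.2‖ ^ 2) :=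
      Real.contDiffAt_sqrt (ne_of_gt (hrpos p.1 p.2))
    have h3 : ContDiffAt ℝ (⊤ : ℕ∞) (Real.sqrt ∘ (fun p : XX n × XX n => C₁ - ‖a p.1 p.2‖ ^ 2)) p :=
      h1.comp p hg.contDiffAt
    have h4 : ContDiffAt ℝ (⊤ : ℕ∞)
        ((Complex.ofRealCLM : ℝ →L[ℝ] ℂ) ∘ Real.sqrt ∘ (fun p : XX n × XX n => C₁ - ‖a p.1 p.2‖ ^ 2)) p :=
      Complex.ofRealCLM.contDiff.contDiffAt.comp p h3
    exact h4.congr_of_eventuallyEq (Filter.Eventually.of_forall fun q => rfl)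
  -- smoothness and estimates for u
  have hsu : Sm u := Sm_sub (Sm_const _) (Sm_mul ha.1 (Sm_cj ha.1))
  have heu : Est u := Est_sub (Sm_const _) (Sm_mul ha.1 (Sm_cj ha.1)) (Est_const _)
    (Est_mul ha.1 (Sm_cj ha.1) (est_of_isSymbol ha) (Est_cj ha.1 (est_of_isSymbol ha)))
  -- b * b = u
  have hbu : b * b = u := by
    funext x ξ
    show ((Real.sqrt (C₁ - ‖a x ξ‖ ^ 2) : ℂ)) * ((Real.sqrt (C₁ - ‖a x ξ‖ ^ 2) : ℂ))
      = (C₁ : ℂ) - a x ξ * (starRingEnd ℂ) (a x ξ)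
    rw [← Complex.ofReal_mul, Real.mul_self_sqrt (hrpos x ξ).le, Complex.mul_conj,
      Complex.normSq_eq_norm_sq]
    push_cast
    ring
  -- lower and upper bounds for b
  have hb1 : ∀ x ξ : XX n, 1 ≤ ‖b x ξ‖ := by
    intro x ξ
    show (1 : ℝ) ≤ ‖((Real.sqrt (C₁ - ‖a x ξ‖ ^ 2) : ℝ) : ℂ)‖
    rw [Complex.norm_real, Real.norm_eq_abs, abs_of_nonneg (Real.sqrt_nonneg _)]
    calc (1 : ℝ) = Real.sqrt 1 := Real.sqrt_one.symm
      _ ≤ Real.sqrt (C₁ - ‖a x ξ‖ ^ 2) := Real.sqrt_le_sqrt (hr x ξ)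
  have hbB : ∀ x ξ : XX n, ‖b x ξ‖ ≤ Real.sqrt C₁ := by
    intro x ξ
    show ‖((Real.sqrt (C₁ - ‖a x ξ‖ ^ 2) : ℝ) : ℂ)‖ ≤ _
    rw [Complex.norm_real, Real.norm_eq_abs, abs_of_nonneg (Real.sqrt_nonneg _)]
    refine Real.sqrt_le_sqrt ?_
    have := sq_nonneg (‖a x ξ‖)
    linarith
  have heb : Est b := Est_sqrt hsb hsu heu hbu hb1 (Real.sqrt C₁) hbB
  exact ⟨isSymbol_of_est hsb heb, part2⟩
end
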